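/- arXiv:2105.05947 — 8 statements merged into one kernel-verified Lean document; each statement's English description precedes it below -/
import Mathlib

section
/- Let ω : ℝ → ℝ be any function, n ≥ 1, X an n×n real symmetric positive semidefinite matrix, and Y an n×n real matrix with Yᵀ = Y, Y·Y = Y, and X = Y·X. Then there exist a real orthogonal matrix U (UᵀU = I) and vectors λˣ, λʸ ∈ ℝⁿ such that X = U·Diag(λˣ)·Uᵀ, Y = U·Diag(λʸ)·Uᵀ, λˣᵢ ≥ 0 and λʸᵢ ∈ {0,1} for every i, λˣᵢ = 0 whenever λʸᵢ = 0, and ∑_{i=1}^n ω(λˣᵢ) = ∑_{i : λʸᵢ = 1} ω(λˣᵢ) + (n − tr(Y))·ω(0). (This identity shows that the mixed-projection problem with spectral regularizer tr(f(X)) = ∑ᵢ ω(λᵢ(X)) and its matrix-perspective reformulation, whose regularizer is tr(g_f(X,Y)) + (n − tr(Y))ω(0), have equal objective values at every feasible point, hence equal optimal values — Theorem 1 of the paper.) -/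
/-!
Diagonalize `X + Y` by an orthogonal matrix. Every eigenvector `v` of `X + Y` is a common
eigenvector of `X` and `Y`: for the eigenvalue `0`, positive semidefiniteness of `X` and `Y`
gives `X v = Y v = 0`; for an eigenvalue `s ≠ 0`, `Y (X + Y) = X + Y` gives `Y v = v` and then
`X v = (s - 1) v`. The eigenvalues of `Y` are thus `0` or `1`, those of `X` vanish where `Y`'s
do, and the sum identity is a count of the indices with `ly i = 0`.
-/

open Matrix

section Eigenvectors

open scoped ComplexOrder

variable {n 𝕜 : Type*} [Fintype n] [RCLike 𝕜] {A B X Y : Matrix n n 𝕜}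

lemma Matrix.PosSemidef.mulVec_eq_zero_of_add_mulVec_eq_zero (hA : A.PosSemidef)
    (hB : B.PosSemidef) {v : n → 𝕜} (hv : (A + B) *ᵥ v = 0) : A *ᵥ v = 0 ∧ B *ᵥ v = 0 := by
  have hsum : star v ⬝ᵥ A *ᵥ v + star v ⬝ᵥ B *ᵥ v = 0 := by
    rw [← dotProduct_add, ← add_mulVec, hv, dotProduct_zero]
  obtain ⟨hAv, hBv⟩ := (add_eq_zero_iff_of_nonneg (hA.dotProduct_mulVec_nonneg v)
    (hB.dotProduct_mulVec_nonneg v)).mp hsum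
  exact ⟨(hA.dotProduct_mulVec_zero_iff v).mp hAv, (hB.dotProduct_mulVec_zero_iff v).mp hBv⟩

lemma exists_eigen_of_add_mulVec_eq_smul (hX : X.PosSemidef) (hY : Y.PosSemidef)
    (hYproj : Y * Y = Y) (hXY : Y * X = X) {v : n → 𝕜} {s : 𝕜} (hv : (X + Y) *ᵥ v = s • v) :
    ∃ a b : 𝕜, X *ᵥ v = a • v ∧ Y *ᵥ v = b • v ∧ (b = 0 ∨ b = 1) ∧ (b = 0 → a = 0) := by
  rcases eq_or_ne s 0 with rfl | hs
  · obtain ⟨hXv, hYv⟩ := hX.mulVec_eq_zero_of_add_mulVec_eq_zero hY (by rwa [zero_smul] at hv)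
    exact ⟨0, 0, by rw [hXv, zero_smul], by rw [hYv, zero_smul], .inl rfl, fun _ => rfl⟩
  · have hYv : Y *ᵥ v = v := by
      have h : s • Y *ᵥ v = s • v := by
        rw [← mulVec_smul, ← hv, mulVec_mulVec, mul_add, hXY, hYproj]
      exact smul_right_injective _ hs h
    refine ⟨s - 1, 1, ?_, by rw [hYv, one_smul], .inr rfl, fun h => absurd h one_ne_zero⟩
    rw [sub_smul, one_smul, ← hv, add_mulVec, hYv, add_sub_cancel_right]

end Eigenvectors

section Orthogonal

variable {n : Type*} [Fintype n] [DecidableEq n] {A U : Matrix n n ℝ} {d : n → ℝ}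

lemma Matrix.IsHermitian.exists_orthogonal_eigenvectors (hA : A.IsHermitian) :
    ∃ (U : Matrix n n ℝ) (s : n → ℝ), Uᵀ * U = 1 ∧ U * Uᵀ = 1 ∧ ∀ j, A *ᵥ Uᵀ j = s j • Uᵀ j := by
  have hU := hA.eigenvectorUnitary.2
  refine ⟨hA.eigenvectorUnitary, hA.eigenvalues, ?_, ?_, hA.mulVec_eigenvectorBasis⟩
  · simpa [star_eq_conjTranspose] using Matrix.mem_unitaryGroup_iff'.mp hU
  · simpa [star_eq_conjTranspose] using Matrix.mem_unitaryGroup_iff.mp hU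

lemma eq_mul_diagonal_mul_transpose (hU : U * Uᵀ = 1) (h : ∀ j, A *ᵥ Uᵀ j = d j • Uᵀ j) :
    A = U * diagonal d * Uᵀ := by
  have hAU : A * U = U * diagonal d := by
    ext i j
    have hij := congrFun (h j) i
    simp only [mulVec, dotProduct, transpose_apply, Pi.smul_apply, smul_eq_mul] at hij
    rw [mul_apply, hij, mul_diagonal, mul_comm]
  rw [← hAU, Matrix.mul_assoc, hU, Matrix.mul_one]

lemma trace_mul_diagonal_mul_transpose (hU : Uᵀ * U = 1) :
    (U * diagonal d * Uᵀ).trace = ∑ i, d i := by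
  rw [trace_mul_cycle, hU, Matrix.one_mul, trace_diagonal]

lemma Matrix.PosSemidef.nonneg_of_eq_mul_diagonal_mul_transpose (hA : A.PosSemidef)
    (hU : Uᵀ * U = 1) (h : A = U * diagonal d * Uᵀ) (i : n) : 0 ≤ d i := by
  have hd : diagonal d = Uᴴ * A * U := by
    rw [conjTranspose_eq_transpose_of_trivial, h]
    simp only [← Matrix.mul_assoc, hU, Matrix.one_mul]
    rw [Matrix.mul_assoc, hU, Matrix.mul_one]
  exact posSemidef_diagonal_iff.mp (hd ▸ hA.conjTranspose_mul_mul_same U) i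

end Orthogonal

lemma Matrix.posSemidef_of_transpose_eq_of_mul_self_eq {n : Type*} [Fintype n]
    {Y : Matrix n n ℝ} (hYsymm : Yᵀ = Y) (hYproj : Y * Y = Y) : Y.PosSemidef := by
  simpa [conjTranspose_eq_transpose_of_trivial, hYsymm, hYproj] using
    posSemidef_conjTranspose_mul_self Y

lemma sum_eq_sum_filter_add_card_sub_sum_mul {ι : Type*} [Fintype ι] (f : ℝ → ℝ) {lx ly : ι → ℝ}
    [DecidablePred fun i => ly i = 1]
    (hly : ∀ i, ly i = 0 ∨ ly i = 1) (hlx : ∀ i, ly i = 0 → lx i = 0) :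
    ∑ i, f (lx i) = ∑ i ∈ Finset.univ.filter (fun i => ly i = 1), f (lx i)
      + (Fintype.card ι - ∑ i, ly i) * f 0 := by
  have key : ∀ i, f (lx i) = (if ly i = 1 then f (lx i) else 0) + (1 - ly i) * f 0 := by
    intro i
    rcases hly i with h | h <;> simp [h, hlx i]
  rw [Finset.sum_congr rfl fun i _ => key i, Finset.sum_add_distrib, Finset.sum_filter,
    ← Finset.sum_mul, Finset.sum_sub_distrib, Finset.sum_const, Finset.card_univ, nsmul_one]

open scoped Classical in
theorem stmt_0_general (n : ℕ) (ω : ℝ → ℝ)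
    (X Y : Matrix (Fin n) (Fin n) ℝ)
    (hX : X.PosSemidef) (hYsymm : Yᵀ = Y) (hYproj : Y * Y = Y) (hXY : X = Y * X) :
    ∃ (U : Matrix (Fin n) (Fin n) ℝ) (lx ly : Fin n → ℝ),
      Uᵀ * U = 1 ∧
      X = U * Matrix.diagonal lx * Uᵀ ∧
      Y = U * Matrix.diagonal ly * Uᵀ ∧
      (∀ i, 0 ≤ lx i) ∧
      (∀ i, ly i = 0 ∨ ly i = 1) ∧
      (∀ i, ly i = 0 → lx i = 0) ∧
      (∑ i, ω (lx i)) =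
        (∑ i ∈ Finset.univ.filter (fun i => ly i = 1), ω (lx i))
          + ((n : ℝ) - Y.trace) * ω 0 := by
  have hY := posSemidef_of_transpose_eq_of_mul_self_eq hYsymm hYproj
  obtain ⟨U, s, hUtU, hUUt, hs⟩ :=
    (hX.isHermitian.add hY.isHermitian).exists_orthogonal_eigenvectors
  choose lx ly hlx hly hly01 hlxy using fun j =>
    exists_eigen_of_add_mulVec_eq_smul hX hY hYproj hXY.symm (hs j)
  have hXdiag := eq_mul_diagonal_mul_transpose hUUt hlx
  have hYdiag := eq_mul_diagonal_mul_transpose hUUt hly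
  refine ⟨U, lx, ly, hUtU, hXdiag, hYdiag, hX.nonneg_of_eq_mul_diagonal_mul_transpose hUtU hXdiag,
    hly01, hlxy, ?_⟩
  rw [hYdiag, trace_mul_diagonal_mul_transpose hUtU]
  simpa using sum_eq_sum_filter_add_card_sub_sum_mul ω hly01 hlxy

open scoped Classical in
theorem stmt_0 (n : ℕ) (hn : 1 ≤ n) (ω : ℝ → ℝ)
    (X Y : Matrix (Fin n) (Fin n) ℝ)
    (hX : X.PosSemidef) (hYsymm : Yᵀ = Y) (hYproj : Y * Y = Y) (hXY : X = Y * X) :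
    ∃ (U : Matrix (Fin n) (Fin n) ℝ) (lx ly : Fin n → ℝ),
      Uᵀ * U = 1 ∧
      X = U * Matrix.diagonal lx * Uᵀ ∧
      Y = U * Matrix.diagonal ly * Uᵀ ∧
      (∀ i, 0 ≤ lx i) ∧
      (∀ i, ly i = 0 ∨ ly i = 1) ∧
      (∀ i, ly i = 0 → lx i = 0) ∧
      (∑ i, ω (lx i)) =
        (∑ i ∈ Finset.univ.filter (fun i => ly i = 1), ω (lx i))
          + ((n : ℝ) - Y.trace) * ω 0 :=
  stmt_0_general n ω X Y hX hYsymm hYproj hXY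
end

section
/- Let Ω : ℝ → ℝ satisfy Ω(0) ≥ 0, let c, x̄ ∈ ℝ, and let s ∈ ℝ be a subgradient of Ω at x̄, i.e., Ω(y) ≥ Ω(x̄) + s·(y − x̄) for all y ∈ ℝ. Then for every z ∈ {0,1}, every x ∈ ℝ with x = 0 whenever z = 0, and every ρ ∈ ℝ with ρ ≥ Ω(x) + c·z, the perspective cut ρ ≥ (c + Ω(x̄))·z + s·(x − x̄·z) holds. (Proposition 1: validity of perspective cuts for the epigraph of a convex function under a logical on/off constraint.) -/
/-- Proposition 1: validity of perspective cuts for the epigraph of a convex function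
under a logical on/off constraint. -/
theorem stmt_10 (Ω : ℝ → ℝ) (c xbar s : ℝ) (hΩ0 : 0 ≤ Ω 0)
    (hs : ∀ y : ℝ, Ω xbar + s * (y - xbar) ≤ Ω y)
    (z x ρ : ℝ) (hz : z = 0 ∨ z = 1) (hxz : z = 0 → x = 0)
    (hρ : Ω x + c * z ≤ ρ) :
    (c + Ω xbar) * z + s * (x - xbar * z) ≤ ρ := by
  rcases hz with rfl | rfl
  · -- the cut reads `0 ≤ ρ`, and `ρ ≥ Ω 0 ≥ 0`
    obtain rfl := hxz rfl
    linarith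
  · -- the cut is the subgradient inequality at `x`, shifted by `c`
    linarith [hs x]
end

section
/- Let A be an n×m real matrix and k a natural number. Then inf{ (1/2)‖X − A‖_F² : X an n×m real matrix with rank(X) ≤ k } = inf{ (1/2)tr(θ) − tr(AᵀX) + (1/2)‖A‖_F² : X an n×m real matrix, θ an n×n real symmetric matrix, Y an m×m real symmetric matrix such that Y and I − Y are positive semidefinite, tr(Y) ≤ k, and the (n+m)×(n+m) block matrix [[θ, X],[Xᵀ, Y]] is positive semidefinite }. (The rank-k SVD / low-rank approximation problem admits an exact convex semidefinite reformulation via the matrix perspective reformulation technique.) -/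
/-!
For `X` of rank at most `k`, the orthogonal projection `P` onto the row space of `X` makes
`(X, X Xᵀ, P)` feasible for the semidefinite program with the same objective value.
Conversely, conjugating the block matrix by `[1; -Aᵀ]` gives
`tr θ - 2 tr(Aᵀ X) + tr(Aᵀ A Y) ≥ 0`, so the objective is at least `½‖A‖² - ½ tr(Aᵀ A Y)`.
Over `0 ≤ Y ≤ 1` with `tr Y ≤ k`, the linear function `tr(Aᵀ A Y)` is maximized, as in Ky Fan's
maximum principle, by the projection `P` onto `k` top eigenvectors of `Aᵀ A`; this reduces to a
fractional knapsack problem for the diagonal of `Y` in an eigenbasis. Then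
`½‖A - A P‖² = ½‖A‖² - ½ tr(Aᵀ A P)` with `rank (A P) ≤ k`.
-/

open Matrix BigOperators Finset Unitary

section Knapsack

variable {ι : Type*} [Fintype ι]

theorem sum_mul_le_sum_of_threshold {μ z : ι → ℝ} {S : Finset ι} {t : ℝ} (ht : 0 ≤ t)
    (hS : ∀ i ∈ S, t ≤ μ i) (hSc : ∀ j ∉ S, μ j ≤ t) (hz0 : ∀ i, 0 ≤ z i) (hz1 : ∀ i, z i ≤ 1)
    (hz : ∑ i, z i ≤ #S) : ∑ i, μ i * z i ≤ ∑ i ∈ S, μ i := by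
  classical
  have hterm : ∀ i, (μ i - t) * z i ≤ if i ∈ S then μ i - t else 0 := fun i => by
    split_ifs with hi
    · exact mul_le_of_le_one_right (sub_nonneg.2 (hS i hi)) (hz1 i)
    · exact mul_nonpos_of_nonpos_of_nonneg (sub_nonpos.2 (hSc i hi)) (hz0 i)
  have hsum := sum_le_sum fun i (_ : i ∈ univ) => hterm i
  rw [← sum_filter, filter_mem_eq_inter, univ_inter, sum_sub_distrib, sum_const,
    nsmul_eq_mul] at hsum
  simp only [sub_mul, sum_sub_distrib, ← mul_sum] at hsum
  linarith [mul_le_mul_of_nonneg_left hz ht]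

theorem exists_card_eq_forall_le_of_notMem (μ : ι → ℝ) {k : ℕ} (hk : k ≤ Fintype.card ι) :
    ∃ S : Finset ι, #S = k ∧ ∀ i ∈ S, ∀ j ∉ S, μ j ≤ μ i := by
  classical
  obtain ⟨S, hS, hmax⟩ := (powersetCard k (univ : Finset ι)).exists_max_image
    (fun S => ∑ i ∈ S, μ i) (powersetCard_nonempty.2 (by simpa using hk))
  have hSk : #S = k := (mem_powersetCard.1 hS).2
  refine ⟨S, hSk, fun i hi j hj => ?_⟩
  have hj' : j ∉ S.erase i := fun h => hj (mem_of_mem_erase h)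
  have hswap := hmax (insert j (S.erase i)) (mem_powersetCard.2 ⟨subset_univ _, by
    rw [card_insert_of_notMem hj', card_erase_of_mem hi, hSk]
    have : 0 < k := hSk ▸ card_pos.2 ⟨i, hi⟩
    omega⟩)
  rw [sum_insert hj', sum_erase_eq_sub hi] at hswap
  linarith

theorem exists_card_le_sum_mul_le {μ z : ι → ℝ} (hμ : ∀ i, 0 ≤ μ i) (hz0 : ∀ i, 0 ≤ z i)
    (hz1 : ∀ i, z i ≤ 1) {k : ℕ} (hz : ∑ i, z i ≤ k) :
    ∃ S : Finset ι, #S ≤ k ∧ ∑ i, μ i * z i ≤ ∑ i ∈ S, μ i := by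
  classical
  rcases le_or_gt (Fintype.card ι) k with hιk | hkι
  · refine ⟨univ, by simpa using hιk, sum_le_sum fun i _ => ?_⟩
    exact mul_le_of_le_one_right (hμ i) (hz1 i)
  obtain ⟨S, hSk, hSμ⟩ := exists_card_eq_forall_le_of_notMem μ hkι.le
  have hSc : Sᶜ.Nonempty := by
    rw [← card_pos, card_compl]
    omega
  refine ⟨S, hSk.le, sum_mul_le_sum_of_threshold (t := Sᶜ.sup' hSc μ) ?_ ?_ ?_ hz0 hz1
    (hSk ▸ hz)⟩
  · obtain ⟨j, hj⟩ := hSc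
    exact (hμ j).trans (le_sup' μ hj)
  · intro i hi
    obtain ⟨j, hj, hjt⟩ := exists_mem_eq_sup' hSc μ
    exact hjt ▸ hSμ i hi j (mem_compl.1 hj)
  · exact fun j hj => le_sup' μ (mem_compl.2 hj)

end Knapsack

theorem IsStarProjection.transpose_eq {ι : Type*} [Fintype ι] {P : Matrix ι ι ℝ}
    (hP : IsStarProjection P) : Pᵀ = P := by
  rw [← conjTranspose_eq_transpose_of_trivial]
  exact hP.isSelfAdjoint

open scoped MatrixOrder in
theorem IsStarProjection.posSemidef {ι : Type*} [Fintype ι] {P : Matrix ι ι ℝ}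
    (hP : IsStarProjection P) : P.PosSemidef :=
  nonneg_iff_posSemidef.1 hP.nonneg

namespace Matrix

section Rectangular

variable {n m : Type*} [Fintype n] [Fintype m]

theorem trace_transpose_mul_eq_sum_sum (A X : Matrix n m ℝ) :
    (Aᵀ * X).trace = ∑ i, ∑ j, A i j * X i j := by
  rw [sum_comm]
  simp [trace, mul_apply]

theorem sum_sum_sq_eq_trace_transpose_mul (M : Matrix n m ℝ) :
    ∑ i, ∑ j, M i j ^ 2 = (Mᵀ * M).trace := by
  simp [trace_transpose_mul_eq_sum_sum, sq]

theorem sum_sum_sub_sq_eq (X A : Matrix n m ℝ) :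
    ∑ i, ∑ j, (X i j - A i j) ^ 2
      = (X * Xᵀ).trace - 2 * (Aᵀ * X).trace + ∑ i, ∑ j, A i j ^ 2 := by
  rw [trace_mul_comm, ← sum_sum_sq_eq_trace_transpose_mul, trace_transpose_mul_eq_sum_sum,
    mul_sum, ← sum_sub_distrib, ← sum_add_distrib]
  refine sum_congr rfl fun i _ => ?_
  rw [mul_sum, ← sum_sub_distrib, ← sum_add_distrib]
  exact sum_congr rfl fun j _ => by ring

theorem sum_sum_mul_sub_sq_eq [DecidableEq m] {P : Matrix m m ℝ} (hP : IsStarProjection P)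
    (A : Matrix n m ℝ) :
    ∑ i, ∑ j, ((A * P) i j - A i j) ^ 2 = ∑ i, ∑ j, A i j ^ 2 - (Aᵀ * A * P).trace := by
  have hres : A * P - A = -(A * (1 - P)) := by rw [Matrix.mul_sub, Matrix.mul_one, neg_sub]
  simp_rw [← sub_apply, sum_sum_sq_eq_trace_transpose_mul, hres, transpose_neg,
    transpose_mul, hP.one_sub.transpose_eq, Matrix.neg_mul, Matrix.mul_neg, neg_neg]
  rw [Matrix.mul_assoc, trace_mul_comm, ← Matrix.mul_assoc, Matrix.mul_assoc (Aᵀ * A),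
    hP.one_sub.isIdempotentElem.eq, Matrix.mul_sub, Matrix.mul_one, trace_sub]

theorem posSemidef_fromBlocks_mul_transpose {X : Matrix n m ℝ} {P : Matrix m m ℝ}
    (hP : IsStarProjection P) (hXP : X * P = X) :
    (fromBlocks (X * Xᵀ) X Xᵀ P).PosSemidef := by
  have hPX : P * Xᵀ = Xᵀ := by rw [← hP.transpose_eq, ← transpose_mul, hXP]
  have h : fromBlocks (X * Xᵀ) X Xᵀ P = (fromBlocks 0 0 Xᵀ P)ᴴ * fromBlocks 0 0 Xᵀ P := by
    simp [conjTranspose_eq_transpose_of_trivial, fromBlocks_transpose, fromBlocks_multiply,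
      hP.transpose_eq, hP.isIdempotentElem.eq, hPX, hXP]
  rw [h]
  exact posSemidef_conjTranspose_mul_self _

theorem two_mul_trace_le_of_posSemidef_fromBlocks [DecidableEq n] {θ : Matrix n n ℝ}
    {X : Matrix n m ℝ} {Y : Matrix m m ℝ} (h : (fromBlocks θ X Xᵀ Y).PosSemidef)
    (A : Matrix n m ℝ) : 2 * (Aᵀ * X).trace ≤ θ.trace + (Aᵀ * A * Y).trace := by
  let F : Matrix (n ⊕ m) n ℝ := fromRows 1 (-Aᵀ)
  have hS := (h.conjTranspose_mul_mul_same F).trace_nonneg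
  have e : Fᴴ * fromBlocks θ X Xᵀ Y * F = θ - A * Xᵀ - X * Aᵀ + A * Y * Aᵀ := by
    rw [conjTranspose_eq_transpose_of_trivial, transpose_fromRows, fromCols_mul_fromBlocks,
      fromCols_mul_fromRows]
    simp only [transpose_one, Matrix.one_mul, Matrix.mul_one, Matrix.neg_mul, Matrix.mul_neg,
      transpose_neg, transpose_transpose, Matrix.add_mul, Matrix.mul_assoc]
    abel
  have h₁ : (X * Aᵀ).trace = (Aᵀ * X).trace := trace_mul_comm X Aᵀ
  have h₂ : (A * Xᵀ).trace = (Aᵀ * X).trace := by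
    rw [← trace_transpose, transpose_mul, transpose_transpose, h₁]
  rw [e, trace_add, trace_sub, trace_sub, trace_mul_cycle, h₁, h₂] at hS
  linarith

end Rectangular

section Square

variable {ι : Type*} [Fintype ι] [DecidableEq ι]

open scoped MatrixOrder in
theorem PosSemidef.map_starAlgEquiv {M : Matrix ι ι ℝ} (hM : M.PosSemidef)
    (φ : Matrix ι ι ℝ ≃⋆ₐ[ℝ] Matrix ι ι ℝ) : (φ M).PosSemidef :=
  nonneg_iff_posSemidef.1 (map_nonneg φ hM.nonneg)

theorem trace_conjStarAlgAut (U : unitaryGroup ι ℝ) (M : Matrix ι ι ℝ) :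
    (conjStarAlgAut ℝ _ U M).trace = M.trace := by
  rw [conjStarAlgAut_apply, trace_mul_cycle, Unitary.coe_star_mul_self, one_mul]

theorem isStarProjection_diagonal_ite (p : ι → Prop) [DecidablePred p] :
    IsStarProjection (diagonal fun i => if p i then (1 : ℝ) else 0) where
  isIdempotentElem := by
    rw [IsIdempotentElem, diagonal_mul_diagonal]
    congr 1
    ext i
    split_ifs <;> norm_num
  isSelfAdjoint := by
    rw [IsSelfAdjoint, star_eq_conjTranspose, diagonal_conjTranspose, star_trivial]

theorem IsHermitian.eq_conjStarAlgAut_diagonal {B : Matrix ι ι ℝ} (hB : B.IsHermitian) :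
    B = conjStarAlgAut ℝ _ hB.eigenvectorUnitary (diagonal hB.eigenvalues) := by
  simpa [RCLike.ofReal_real_eq_id] using hB.spectral_theorem

theorem exists_isStarProjection_mul_eq_self {m : Type*} [Fintype m] (X : Matrix m ι ℝ) :
    ∃ P : Matrix ι ι ℝ, IsStarProjection P ∧ X * P = X ∧ P.trace = X.rank := by
  have hH : (Xᵀ * X).IsHermitian := by
    simpa using (posSemidef_conjTranspose_mul_self X).isHermitian
  have hX := hH.eq_conjStarAlgAut_diagonal
  set μ := hH.eigenvalues
  set φ := conjStarAlgAut ℝ (Matrix ι ι ℝ) hH.eigenvectorUnitary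
  -- `P` projects onto the eigenvectors of `Xᵀ X` with nonzero eigenvalue, i.e. onto the row
  -- space of `X`.
  set P := φ (diagonal fun i => if μ i ≠ 0 then 1 else 0)
  set Q := φ (diagonal fun i => if μ i = 0 then 1 else 0)
  have hPQ : 1 - P = Q := by
    rw [← map_one φ, ← map_sub, ← diagonal_one, diagonal_sub]
    congr 2
    ext i
    split_ifs <;> simp_all
  have hQ : IsStarProjection Q := (isStarProjection_diagonal_ite _).map φ
  have hXQ : X * Q = 0 := by
    refine conjTranspose_mul_self_eq_zero.1 ?_
    rw [conjTranspose_mul, ← star_eq_conjTranspose, hQ.isSelfAdjoint.star_eq,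
      conjTranspose_eq_transpose_of_trivial, Matrix.mul_assoc, ← Matrix.mul_assoc Xᵀ, hX,
      ← map_mul, ← map_mul, diagonal_mul_diagonal, diagonal_mul_diagonal]
    convert map_zero φ
    rw [← diagonal_zero]
    congr 1
    ext i
    by_cases h : μ i = 0 <;> simp [h]
  refine ⟨P, (isStarProjection_diagonal_ite _).map φ, ?_, ?_⟩
  · rw [← sub_sub_cancel 1 P, hPQ, Matrix.mul_sub, hXQ, Matrix.mul_one, sub_zero]
  · rw [trace_conjStarAlgAut, trace_diagonal, sum_boole, ← rank_transpose_mul_self,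
      hH.rank_eq_card_non_zero_eigs, Fintype.card_subtype]

theorem exists_isStarProjection_trace_mul_le {B Y : Matrix ι ι ℝ} (hB : B.PosSemidef)
    (hY : Y.PosSemidef) (hY1 : (1 - Y).PosSemidef) {k : ℕ} (htr : Y.trace ≤ k) :
    ∃ P : Matrix ι ι ℝ, IsStarProjection P ∧ P.rank ≤ k ∧ (B * Y).trace ≤ (B * P).trace := by
  have hB' := hB.1.eq_conjStarAlgAut_diagonal
  set μ := hB.1.eigenvalues
  set φ := conjStarAlgAut ℝ (Matrix ι ι ℝ) hB.1.eigenvectorUnitary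
  -- `Z` is `Y` written in an orthonormal eigenbasis of `B`.
  set Z := φ.symm Y
  have hZ : Z.PosSemidef := hY.map_starAlgEquiv φ.symm
  have hZ1 : (1 - Z).PosSemidef := by
    simpa [Z, map_sub] using hY1.map_starAlgEquiv φ.symm
  have hZtr : Z.trace = Y.trace := by
    simp only [Z, φ, conjStarAlgAut_symm, trace_conjStarAlgAut]
  have hBY : (B * Y).trace = ∑ i, μ i * Z i i := by
    rw [hB', ← φ.apply_symm_apply Y, ← map_mul, trace_conjStarAlgAut]
    simp [trace, diagonal_mul, Z]
  obtain ⟨S, hSk, hle⟩ := exists_card_le_sum_mul_le hB.eigenvalues_nonneg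
    (fun i => hZ.diag_nonneg) (fun i => by simpa using hZ1.diag_nonneg (i := i))
    (hZtr.trans_le htr)
  refine ⟨φ (diagonal fun i => if i ∈ S then 1 else 0), (isStarProjection_diagonal_ite _).map φ,
    ?_, ?_⟩
  · calc _ ≤ (diagonal fun i => if i ∈ S then (1 : ℝ) else 0).rank :=
          (rank_mul_le_left _ _).trans (rank_mul_le_right _ _)
      _ ≤ k := by simpa [rank_diagonal, Fintype.card_subtype] using hSk
  · rw [hBY, hB', ← map_mul, trace_conjStarAlgAut, diagonal_mul_diagonal, trace_diagonal]
    simpa [← sum_filter] using hle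

end Square

end Matrix

/-- The rank-k SVD / low-rank approximation problem admits an exact convex semidefinite
reformulation via the matrix perspective reformulation technique. -/
theorem stmt_11 (n m k : ℕ) (A : Matrix (Fin n) (Fin m) ℝ) :
    sInf {v : ℝ | ∃ X : Matrix (Fin n) (Fin m) ℝ, X.rank ≤ k ∧
        v = (1 / 2) * ∑ i, ∑ j, (X i j - A i j) ^ 2}
    = sInf {v : ℝ | ∃ (X : Matrix (Fin n) (Fin m) ℝ) (θ : Matrix (Fin n) (Fin n) ℝ)
        (Y : Matrix (Fin m) (Fin m) ℝ),
        θᵀ = θ ∧ Yᵀ = Y ∧ Y.PosSemidef ∧ (1 - Y).PosSemidef ∧ Y.trace ≤ (k : ℝ) ∧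
        (Matrix.fromBlocks θ X Xᵀ Y).PosSemidef ∧
        v = (1 / 2) * θ.trace - (Aᵀ * X).trace + (1 / 2) * ∑ i, ∑ j, (A i j) ^ 2} := by
  refine csInf_eq_csInf_of_forall_exists_le ?_ ?_
  · rintro _ ⟨X, hX, rfl⟩
    obtain ⟨P, hP, hXP, hPtr⟩ := X.exists_isStarProjection_mul_eq_self
    refine ⟨_, ⟨X, X * Xᵀ, P, by simp, hP.transpose_eq, hP.posSemidef, hP.one_sub.posSemidef,
      by rw [hPtr]; exact_mod_cast hX, posSemidef_fromBlocks_mul_transpose hP hXP, rfl⟩, ?_⟩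
    rw [sum_sum_sub_sq_eq]
    linarith
  · rintro _ ⟨X, θ, Y, -, -, hY, hY1, htr, hM, rfl⟩
    obtain ⟨P, hP, hPk, hle⟩ := exists_isStarProjection_trace_mul_le
      (by simpa using posSemidef_conjTranspose_mul_self A) hY hY1 htr
    refine ⟨_, ⟨A * P, (rank_mul_le_right _ _).trans hPk, rfl⟩, ?_⟩
    rw [sum_sum_mul_sub_sq_eq hP]
    linarith [two_mul_trace_le_of_posSemidef_fromBlocks hM A]
end

section
/- Let Y be an n×n real matrix with Yᵀ = Y and Y·Y = Y, let X be an n×m real matrix with Y·X = X, and let θ be an m×m real symmetric matrix. Then the (n+m)×(n+m) block matrix [[Y, X],[Xᵀ, θ]] is positive semidefinite if and only if θ − Xᵀ·X is positive semidefinite. (This is the semidefinite representation of the matrix perspective of the convex quadratic f(X) = XᵀX when the perspective variable Y is an orthogonal projection with X in its range, underlying the matrix-completion and reduced-rank reformulations.) -/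
/-!
Since `Y` is Hermitian with `Y * X = X`, also `Xᵀ * Y = Xᵀ`, and the block matrix factors as
`Pᵀ * diag(Y, θ - Xᵀ * X) * P` with the unipotent `P = [[1, X], [0, 1]]`. Congruence by an
invertible matrix preserves positive semidefiniteness, a block-diagonal matrix is positive
semidefinite iff both blocks are, and the projection `Y = Yᵀ * Y` is positive semidefinite.
-/

open Matrix

namespace Matrix

variable {m n R : Type*} [Fintype m] [Fintype n]

section Ring

variable [Ring R] [StarRing R]

theorem fromBlocks_eq_conjTranspose_mul_fromBlocks_zero_mul [DecidableEq m] [DecidableEq n]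
    {A : Matrix m m R} {B : Matrix m n R} (D : Matrix n n R) (hA : A.IsHermitian)
    (hAB : A * B = B) :
    fromBlocks A B Bᴴ D =
      (fromBlocks 1 B 0 1)ᴴ * fromBlocks A 0 0 (D - Bᴴ * B) * fromBlocks 1 B 0 1 := by
  have hBA : Bᴴ * A = Bᴴ := by rw [← hA.eq, ← conjTranspose_mul, hAB]
  simp [fromBlocks_conjTranspose, fromBlocks_multiply, hAB, hBA]

variable [PartialOrder R] [StarOrderedRing R]

theorem posSemidef_fromBlocks_zero_iff {A : Matrix m m R} {D : Matrix n n R} :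
    (fromBlocks A 0 0 D).PosSemidef ↔ A.PosSemidef ∧ D.PosSemidef := by
  refine ⟨fun h => ⟨h.submatrix Sum.inl, h.submatrix Sum.inr⟩, fun ⟨hA, hD⟩ => ?_⟩
  rw [posSemidef_iff_dotProduct_mulVec] at hA hD ⊢
  refine ⟨IsHermitian.fromBlocks hA.1.eq (by simp) hD.1.eq, fun x => ?_⟩
  rw [← Sum.elim_comp_inl_inr x, fromBlocks_mulVec, Function.star_sumElim,
    sumElim_dotProduct_sumElim]
  simpa using add_nonneg (hA.2 (x ∘ Sum.inl)) (hD.2 (x ∘ Sum.inr))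

theorem _root_.IsStarProjection.posSemidef_s12 {P : Matrix n n R} (hP : IsStarProjection P) :
    P.PosSemidef := by
  have hPP : Pᴴ * P = P := by
    rw [← star_eq_conjTranspose, hP.isSelfAdjoint.star_eq, hP.isIdempotentElem.eq]
  exact hPP ▸ posSemidef_conjTranspose_mul_self P

end Ring

theorem PosSemidef.fromBlocks_iff_of_mul_eq [DecidableEq m] [DecidableEq n] [CommRing R]
    [PartialOrder R] [StarRing R] [StarOrderedRing R] {A : Matrix m m R} {B : Matrix m n R}
    {D : Matrix n n R} (hA : A.PosSemidef) (hAB : A * B = B) :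
    (fromBlocks A B Bᴴ D).PosSemidef ↔ (D - Bᴴ * B).PosSemidef := by
  have hU : IsUnit (fromBlocks 1 B 0 1 : Matrix (m ⊕ n) (m ⊕ n) R) := by
    simp [isUnit_fromBlocks_zero₂₁]
  rw [fromBlocks_eq_conjTranspose_mul_fromBlocks_zero_mul D hA.1 hAB, ← star_eq_conjTranspose,
    hU.posSemidef_star_left_conjugate_iff, posSemidef_fromBlocks_zero_iff]
  exact and_iff_right hA

end Matrix

theorem stmt_12_general (n m : ℕ) (Y : Matrix (Fin n) (Fin n) ℝ) (X : Matrix (Fin n) (Fin m) ℝ)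
    (θ : Matrix (Fin m) (Fin m) ℝ)
    (hYs : Yᵀ = Y) (hYp : Y * Y = Y) (hYX : Y * X = X) :
    (Matrix.fromBlocks Y X Xᵀ θ).PosSemidef ↔ (θ - Xᵀ * X).PosSemidef := by
  have hY : IsStarProjection Y := ⟨hYp, hYs⟩
  simpa using hY.posSemidef_s12.fromBlocks_iff_of_mul_eq (D := θ) hYX

/-- Semidefinite representation of the matrix perspective of `f(X) = XᵀX` when the
perspective variable `Y` is an orthogonal projection with `X` in its range. -/
theorem stmt_12 (n m : ℕ) (Y : Matrix (Fin n) (Fin n) ℝ) (X : Matrix (Fin n) (Fin m) ℝ)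
    (θ : Matrix (Fin m) (Fin m) ℝ)
    (hYs : Yᵀ = Y) (hYp : Y * Y = Y) (hYX : Y * X = X) (hθ : θᵀ = θ) :
    (Matrix.fromBlocks Y X Xᵀ θ).PosSemidef ↔ (θ - Xᵀ * X).PosSemidef :=
  stmt_12_general n m Y X θ hYs hYp hYX
end

section
/- Let B be a p×p real symmetric matrix, β a p×n real matrix, and W an n×n real matrix with Wᵀ = W and W·W = W. If the (p+n)×(p+n) block matrix [[B, β],[βᵀ, W]] is positive semidefinite, then β·W = β, and consequently rank(β) ≤ rank(W) = tr(W). (This is the paper's argument that the semidefinite relaxation of reduced-rank regression is valid: when W is a projection matrix of trace at most k appearing in a positive semidefinite block with β, the matrix β has rank at most k.) -/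
/-!
If `W v = 0`, the positive semidefinite form of `M = [[B, β], [βᵀ, W]]` vanishes at `(0, v)`, so
`M (0, v) = 0`, whose first block is `β v`. Every column of `1 - W` lies in the kernel of the
idempotent `W`, hence `β (1 - W) = 0`. Then `rank β = rank (β W) ≤ rank W`, and an idempotent is
a projection onto its range, whose trace is the dimension of that range.
-/

open Matrix
open scoped ComplexOrder

namespace Matrix

variable {𝕜 m n o : Type*} [RCLike 𝕜] [Fintype m] [Fintype n]

theorem PosSemidef.fromBlocks₁₂_mulVec_eq_zero {A : Matrix m m 𝕜} {B : Matrix m n 𝕜}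
    {C : Matrix n m 𝕜} {D : Matrix n n 𝕜} (h : (fromBlocks A B C D).PosSemidef) {v : n → 𝕜}
    (hv : D *ᵥ v = 0) : B *ᵥ v = 0 := by
  have hM : fromBlocks A B C D *ᵥ Sum.elim 0 v = Sum.elim (B *ᵥ v) 0 := by
    simp [fromBlocks_mulVec, hv]
  have hform : star (Sum.elim 0 v) ⬝ᵥ fromBlocks A B C D *ᵥ Sum.elim 0 v = 0 := by
    rw [hM, Function.star_sumElim, sumElim_dotProduct_sumElim]
    simp
  have hzero := (h.dotProduct_mulVec_zero_iff _).1 hform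
  rw [hM] at hzero
  exact funext fun i => by simpa using congrFun hzero (Sum.inl i)

theorem PosSemidef.fromBlocks₁₂_mul_eq_zero [Fintype o] {A : Matrix m m 𝕜} {B : Matrix m n 𝕜}
    {C : Matrix n m 𝕜} {D : Matrix n n 𝕜} (h : (fromBlocks A B C D).PosSemidef)
    {X : Matrix n o 𝕜} (hX : D * X = 0) : B * X = 0 := by
  refine ext_iff_mulVec.2 fun v => ?_
  rw [← mulVec_mulVec, zero_mulVec]
  exact h.fromBlocks₁₂_mulVec_eq_zero (by rw [mulVec_mulVec, hX, zero_mulVec])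

theorem PosSemidef.fromBlocks₁₂_mul_eq_self [DecidableEq n] {A : Matrix m m 𝕜}
    {B : Matrix m n 𝕜} {C : Matrix n m 𝕜} {D : Matrix n n 𝕜}
    (h : (fromBlocks A B C D).PosSemidef) (hD : IsIdempotentElem D) : B * D = B := by
  have hD' : D * (1 - D) = 0 := by rw [Matrix.mul_sub, Matrix.mul_one, hD.eq, sub_self]
  have hBX := h.fromBlocks₁₂_mul_eq_zero hD'
  rwa [Matrix.mul_sub, Matrix.mul_one, sub_eq_zero, eq_comm] at hBX

end Matrix

theorem IsIdempotentElem.matrix_rank_eq_trace {K n : Type*} [Field K] [Fintype n] [DecidableEq n]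
    {A : Matrix n n K} (hA : IsIdempotentElem A) : (A.rank : K) = A.trace := by
  have hE : IsIdempotentElem A.toLin' := hA.map toLinAlgEquiv'
  rw [← A.trace_toLin'_eq, ((LinearMap.isProj_range_iff_isIdempotentElem _).2 hE).trace]
  rfl

theorem stmt_13_general (p n : ℕ) (B : Matrix (Fin p) (Fin p) ℝ) (β : Matrix (Fin p) (Fin n) ℝ)
    (W : Matrix (Fin n) (Fin n) ℝ) (hWp : W * W = W)
    (h : (Matrix.fromBlocks B β βᵀ W).PosSemidef) :
    β * W = β ∧ β.rank ≤ W.rank ∧ (W.rank : ℝ) = W.trace := by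
  have hβW : β * W = β := h.fromBlocks₁₂_mul_eq_self hWp
  refine ⟨hβW, ?_, IsIdempotentElem.matrix_rank_eq_trace hWp⟩
  calc β.rank = (β * W).rank := by rw [hβW]
    _ ≤ W.rank := rank_mul_le_right β W

/-- If `[[B, β],[βᵀ, W]]` is positive semidefinite and `W` is an orthogonal projection,
then `β·W = β` and hence `rank(β) ≤ rank(W) = tr(W)`. -/
theorem stmt_13 (p n : ℕ) (B : Matrix (Fin p) (Fin p) ℝ) (β : Matrix (Fin p) (Fin n) ℝ)
    (W : Matrix (Fin n) (Fin n) ℝ) (hB : Bᵀ = B) (hWs : Wᵀ = W) (hWp : W * W = W)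
    (h : (Matrix.fromBlocks B β βᵀ W).PosSemidef) :
    β * W = β ∧ β.rank ≤ W.rank ∧ (W.rank : ℝ) = W.trace :=
  stmt_13_general p n B β W hWp h
end

section
/- Let Y be an n×n real matrix with Yᵀ = Y and Y·Y = Y, let X be an n×n real symmetric matrix with X = Y·X, and let X̄ be an arbitrary n×n real symmetric matrix. Then tr(X·X) ≥ 2·tr(X̄·X) − tr(X̄·X̄·Y). Consequently, every ρ ∈ ℝ with ρ ≥ tr(X·X) satisfies the trace form of the generalized (matrix) perspective cut ρ ≥ ⟨X̄², Y⟩ + ⟨2X̄, X − X̄·Y⟩ associated with the quadratic f(X) = X² and subgradient S = 2X̄. (This generalizes the perspective cuts of mixed-integer optimization from cardinality to rank constraints.) -/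
/-!
The cut is the expansion of `0 ≤ ‖X - Y X̄‖²_F`. Since `Y` is a symmetric idempotent fixing the
columns of `X`, the cross term `⟨X, Y X̄⟩` equals `tr(X̄ X)` and the square `‖Y X̄‖²_F` equals
`tr(X̄² Y)`, so the inequality reads `tr(X²) ≥ 2 tr(X̄ X) - tr(X̄² Y)`, and the trace form of the
perspective cut is the same quantity.
-/

open Matrix

variable {m n R : Type*} [Fintype m] [Fintype n] [CommRing R]

namespace Matrix

theorem trace_transpose_mul_comm (A B : Matrix m n R) : (Bᵀ * A).trace = (Aᵀ * B).trace := by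
  rw [← trace_transpose, transpose_mul, transpose_transpose]

theorem trace_transpose_mul_sub_self (A B : Matrix m n R) :
    ((A - B)ᵀ * (A - B)).trace = (Aᵀ * A).trace - 2 * (Aᵀ * B).trace + (Bᵀ * B).trace := by
  rw [transpose_sub, Matrix.sub_mul, Matrix.mul_sub, Matrix.mul_sub, trace_sub, trace_sub,
    trace_sub, trace_transpose_mul_comm A B]
  ring

section Order

variable [LinearOrder R] [IsStrictOrderedRing R]

theorem trace_transpose_mul_self_nonneg (A : Matrix m n R) : 0 ≤ (Aᵀ * A).trace :=
  Finset.sum_nonneg fun j _ => Finset.sum_nonneg fun i _ => mul_self_nonneg (A i j)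

theorem two_mul_trace_transpose_mul_sub_le (A B : Matrix m n R) :
    2 * (Aᵀ * B).trace - (Bᵀ * B).trace ≤ (Aᵀ * A).trace := by
  have h := trace_transpose_mul_self_nonneg (A - B)
  rw [trace_transpose_mul_sub_self] at h
  linarith

end Order

/-- The trace form `⟨X̄², Y⟩ + ⟨2X̄, X - X̄Y⟩` of the perspective cut of `f(X) = X²` at `X̄`. -/
def sqPerspectiveCut (Xbar X Y : Matrix n n R) : R :=
  ((Xbar * Xbar)ᵀ * Y).trace + (((2 : R) • Xbar)ᵀ * (X - Xbar * Y)).trace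

variable {X Y Xbar : Matrix n n R}

theorem sqPerspectiveCut_eq (hXbar : Xbarᵀ = Xbar) :
    sqPerspectiveCut Xbar X Y = 2 * (Xbar * X).trace - (Xbar * Xbar * Y).trace := by
  rw [sqPerspectiveCut, transpose_mul, transpose_smul, hXbar, smul_mul, trace_smul, mul_sub,
    trace_sub, ← mul_assoc, smul_eq_mul]
  ring

theorem trace_transpose_mul_mul_of_eq_mul (hYs : Yᵀ = Y) (hXbar : Xbarᵀ = Xbar) (hX : X = Y * X) :
    (Xᵀ * (Y * Xbar)).trace = (Xbar * X).trace := by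
  have hXY : Xᵀ * Y = Xᵀ := by rw [← hYs, ← transpose_mul, ← hX]
  rw [← mul_assoc, hXY, ← trace_transpose_mul_comm, hXbar]

theorem trace_transpose_mul_self_of_isProj (hYs : Yᵀ = Y) (hYp : Y * Y = Y)
    (hXbar : Xbarᵀ = Xbar) : ((Y * Xbar)ᵀ * (Y * Xbar)).trace = (Xbar * Xbar * Y).trace := by
  rw [transpose_mul, hYs, hXbar, mul_assoc, ← mul_assoc Y, hYp, ← mul_assoc, trace_mul_cycle]

end Matrix

/-- Trace form of the generalized (matrix) perspective cut associated with the quadratic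
`f(X) = X²` and subgradient `S = 2X̄`, under the projection constraint `X = Y·X`. -/
theorem stmt_15 (n : ℕ) (Y X Xbar : Matrix (Fin n) (Fin n) ℝ)
    (hYs : Yᵀ = Y) (hYp : Y * Y = Y) (hXs : Xᵀ = X) (hX : X = Y * X)
    (hXbar : Xbarᵀ = Xbar) :
    2 * (Xbar * X).trace - (Xbar * Xbar * Y).trace ≤ (X * X).trace ∧
    ∀ ρ : ℝ, (X * X).trace ≤ ρ →
      ((Xbar * Xbar)ᵀ * Y).trace + (((2 : ℝ) • Xbar)ᵀ * (X - Xbar * Y)).trace ≤ ρ := by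
  have key : 2 * (Xbar * X).trace - (Xbar * Xbar * Y).trace ≤ (X * X).trace := by
    have h := two_mul_trace_transpose_mul_sub_le X (Y * Xbar)
    rwa [trace_transpose_mul_mul_of_eq_mul hYs hXbar hX,
      trace_transpose_mul_self_of_isProj hYs hYp hXbar, hXs] at h
  refine ⟨key, fun ρ hρ => ?_⟩
  change sqPerspectiveCut Xbar X Y ≤ ρ
  rw [sqPerspectiveCut_eq hXbar]
  exact key.trans hρ
end

section
/- Let M ≥ 0, let Y be an n×n real matrix with Yᵀ = Y and Y·Y = Y, and let X be an n×n real symmetric matrix with X = Y·X. Then (M·I − X is positive semidefinite and M·I + X is positive semidefinite) if and only if (M·Y − X is positive semidefinite and M·Y + X is positive semidefinite). (This is the paper's computation of the matrix perspective of the spectral-norm indicator function: under the projection constraint X = YX, the spectral bound ‖X‖_σ ≤ M is equivalent to the 'spectral big-M' constraint −M·Y ⪯ X ⪯ M·Y.) -/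
/-!
Write `p` for the projection `Y` and `a` for `M • 1`. Since `x` is self-adjoint and `p x = x`,
also `x p = x`, so compressing `a + x` by `p` gives `p (a + x) p = a p + x`, which is
therefore nonnegative whenever `a + x` is. Conversely `a + x = (a p + x) + a (1 - p)`, and
`a (1 - p) = (1 - p)⋆ a (1 - p) ≥ 0` because `a` commutes with `p`. Applying this to `x = ±X`
gives both constraints; the argument works in any star-ordered ring.
-/

open Matrix

section StarRing

variable {R : Type*} [Ring R] [StarRing R] {p a x : R}

namespace IsStarProjection

lemma mul_eq_self_of_mul_eq_self (hp : IsStarProjection p) (hx : IsSelfAdjoint x)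
    (hpx : p * x = x) : x * p = x := by
  simpa [hx.star_eq, hp.isSelfAdjoint.star_eq] using congrArg star hpx

lemma conjugate_add_eq (hp : IsStarProjection p) (hap : Commute a p) (hx : IsSelfAdjoint x)
    (hpx : p * x = x) : p * (a + x) * p = a * p + x := by
  rw [mul_add, add_mul, ← hap.eq, mul_assoc, hp.isIdempotentElem.eq, hpx,
    hp.mul_eq_self_of_mul_eq_self hx hpx]

variable [PartialOrder R] [StarOrderedRing R]

lemma mul_one_sub_nonneg (hp : IsStarProjection p) (ha : 0 ≤ a) (hap : Commute a p) :
    0 ≤ a * (1 - p) := by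
  have hq := hp.one_sub
  calc 0 ≤ star (1 - p) * a * (1 - p) := star_left_conjugate_nonneg ha _
    _ = a * (1 - p) := by
      rw [hq.isSelfAdjoint.star_eq, ← ((Commute.one_right a).sub_right hap).eq, mul_assoc,
        hq.isIdempotentElem.eq]

theorem nonneg_add_iff (hp : IsStarProjection p) (ha : 0 ≤ a) (hap : Commute a p)
    (hx : IsSelfAdjoint x) (hpx : p * x = x) : 0 ≤ a + x ↔ 0 ≤ a * p + x := by
  constructor
  · intro h
    simpa [hp.isSelfAdjoint.star_eq, hp.conjugate_add_eq hap hx hpx] using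
      star_left_conjugate_nonneg h p
  · intro h
    have := add_nonneg h (hp.mul_one_sub_nonneg ha hap)
    rwa [mul_sub, mul_one, add_right_comm, add_sub_cancel] at this

end IsStarProjection

end StarRing

open scoped MatrixOrder

/-- Matrix perspective of the spectral-norm indicator: under the projection constraint
`X = Y·X`, the spectral bound `‖X‖_σ ≤ M` (i.e. `−M·I ⪯ X ⪯ M·I`) is equivalent to the
spectral big-M constraint `−M·Y ⪯ X ⪯ M·Y`. -/
theorem stmt_16 (n : ℕ) (M : ℝ) (hM : 0 ≤ M) (Y X : Matrix (Fin n) (Fin n) ℝ)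
    (hYs : Yᵀ = Y) (hYp : Y * Y = Y) (hXs : Xᵀ = X) (hX : X = Y * X) :
    ((M • (1 : Matrix (Fin n) (Fin n) ℝ) - X).PosSemidef ∧
        (M • (1 : Matrix (Fin n) (Fin n) ℝ) + X).PosSemidef)
      ↔ ((M • Y - X).PosSemidef ∧ (M • Y + X).PosSemidef) := by
  have hY : IsStarProjection Y :=
    ⟨hYp, by rw [IsSelfAdjoint, star_eq_conjTranspose, conjTranspose_eq_transpose_of_trivial, hYs]⟩
  have hXsa : IsSelfAdjoint X := by
    rw [IsSelfAdjoint, star_eq_conjTranspose, conjTranspose_eq_transpose_of_trivial, hXs]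
  have hMI : 0 ≤ M • (1 : Matrix (Fin n) (Fin n) ℝ) := (PosSemidef.one.smul hM).nonneg
  have hMY : Commute (M • (1 : Matrix (Fin n) (Fin n) ℝ)) Y := (Commute.one_left Y).smul_left M
  have key {Z : Matrix (Fin n) (Fin n) ℝ} (hZ : IsSelfAdjoint Z) (hYZ : Y * Z = Z) :
      (M • 1 + Z).PosSemidef ↔ (M • Y + Z).PosSemidef := by
    simpa only [nonneg_iff_posSemidef, smul_one_mul] using
      hY.nonneg_add_iff hMI hMY hZ hYZ
  simp only [sub_eq_add_neg]
  rw [key hXsa hX.symm, key hXsa.neg (by rw [mul_neg, ← hX])]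
end

section
/- Let n ≥ 1 and let k be a natural number with k ≤ n. The convex hull of the set 𝒴ᵏ_n = { Y : Y an n×n real matrix, Yᵀ = Y, Y·Y = Y, tr(Y) ≤ k } of orthogonal projection matrices with trace at most k equals { Y : Y an n×n real symmetric matrix such that Y is positive semidefinite, I − Y is positive semidefinite, and tr(Y) ≤ k }. -/
/-!
Diagonalise `Y = U D Uᵀ` with `U` orthogonal. The eigenvalue vector `λ` of a matrix with
`0 ⪯ Y ⪯ I` and `tr Y ≤ k` lies in the polytope `{λ ∈ [0,1]ⁿ | ∑ λᵢ ≤ k}`, whose extreme points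
are `0/1`-vectors: at a point with a fractional coordinate one can move along `eᵢ - eⱼ` if a
second coordinate is fractional, and along `eᵢ` otherwise, because then `∑ λ < k` by
integrality. By Krein–Milman `λ` is a convex combination of such vectors `χ`, and conjugating
back, `Y` is the same convex combination of the projections `U diag(χ) Uᵀ`, of trace `∑ χᵢ ≤ k`.
-/

open Matrix
open scoped MatrixOrder

section UnitCube

variable {ι : Type*} [Fintype ι]

def unitCubeSumLE (k : ℝ) : Set (ι → ℝ) := Set.Icc 0 1 ∩ {x | ∑ i, x i ≤ k}

lemma isCompact_unitCubeSumLE (k : ℝ) : IsCompact (unitCubeSumLE (ι := ι) k) :=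
  isCompact_Icc.inter_right <|
    isClosed_le (continuous_finsetSum _ fun i _ => continuous_apply i) continuous_const

lemma convex_unitCubeSumLE (k : ℝ) : Convex ℝ (unitCubeSumLE (ι := ι) k) :=
  (convex_Icc 0 1).inter <|
    convex_halfSpace_le ⟨fun _ _ => Finset.sum_add_distrib, fun _ _ => (Finset.mul_sum ..).symm⟩ k

lemma add_mem_unitCubeSumLE {k : ℝ} {x d : ι → ℝ} (hd : ∀ i, |d i| ≤ min (x i) (1 - x i))
    (hsum : ∑ i, x i + |∑ i, d i| ≤ k) : x + d ∈ unitCubeSumLE k := by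
  refine ⟨⟨fun i => ?_, fun i => ?_⟩, ?_⟩
  · show 0 ≤ x i + d i
    linarith [hd i, neg_abs_le (d i), min_le_left (x i) (1 - x i)]
  · show x i + d i ≤ 1
    linarith [hd i, le_abs_self (d i), min_le_right (x i) (1 - x i)]
  · show ∑ i, (x i + d i) ≤ k
    linarith [Finset.sum_add_distrib (f := x) (g := d) (s := Finset.univ), le_abs_self (∑ i, d i)]

lemma sum_lt_natCast_of_eq_zero_or_one {k : ℕ} {x : ι → ℝ} {i : ι} (h0 : 0 < x i) (h1 : x i < 1)
    (hx : ∀ j ≠ i, x j = 0 ∨ x j = 1) (hk : ∑ j, x j ≤ k) : ∑ j, x j < k := by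
  classical
  set N := (Finset.univ.erase i).filter (fun j => x j = 1) |>.card
  have hN : ∑ j ∈ Finset.univ.erase i, x j = N := by
    rw [Finset.natCast_card_filter]
    refine Finset.sum_congr rfl fun j hj => ?_
    rcases hx j (Finset.ne_of_mem_erase hj) with h | h <;> simp [h]
  have hsplit : ∑ j, x j = x i + N := by rw [← Finset.add_sum_erase _ _ (Finset.mem_univ i), hN]
  have hNk : N + 1 ≤ k := by exact_mod_cast (show (N : ℝ) < k by linarith)
  have : (N : ℝ) + 1 ≤ k := by exact_mod_cast hNk
  linarith

lemma exists_add_sub_mem_unitCubeSumLE {k : ℕ} {x : ι → ℝ} (hx : x ∈ unitCubeSumLE k) {i : ι}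
    (h0 : 0 < x i) (h1 : x i < 1) :
    ∃ d ≠ 0, x + d ∈ unitCubeSumLE k ∧ x - d ∈ unitCubeSumLE k := by
  classical
  set δ : ι → ℝ := fun l => min (x l) (1 - x l)
  have hδ0 (l : ι) : 0 ≤ δ l := le_min (hx.1.1 l) (sub_nonneg.2 (hx.1.2 l))
  have hδi : 0 < δ i := lt_min h0 (sub_pos.2 h1)
  suffices ∃ d : ι → ℝ, d ≠ 0 ∧ (∀ l, |d l| ≤ δ l) ∧ ∑ l, x l + |∑ l, d l| ≤ k by
    obtain ⟨d, hd0, hd, hsum⟩ := this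
    refine ⟨d, hd0, add_mem_unitCubeSumLE hd hsum, ?_⟩
    rw [sub_eq_add_neg]
    exact add_mem_unitCubeSumLE (fun l => (abs_neg (d l)).trans_le (hd l))
      (by simpa [Finset.sum_neg_distrib] using hsum)
  by_cases hj : ∃ j ≠ i, 0 < x j ∧ x j < 1
  · obtain ⟨j, hji, hj0, hj1⟩ := hj
    obtain ⟨ε, hε, hεi, hεj⟩ : ∃ ε > 0, ε ≤ δ i ∧ ε ≤ δ j :=
      ⟨_, lt_min hδi (lt_min hj0 (sub_pos.2 hj1)), min_le_left _ _, min_le_right _ _⟩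
    refine ⟨Pi.single i ε - Pi.single j ε, fun h => ?_, fun l => ?_, ?_⟩
    · simpa [hji.symm, hε.ne'] using congrFun h i
    · rcases eq_or_ne l i with rfl | hli
      · simpa [hji.symm, abs_of_pos hε] using hεi
      rcases eq_or_ne l j with rfl | hlj
      · simpa [hli, abs_of_pos hε] using hεj
      · simp [hli, hlj, hδ0 l]
    · simpa [Finset.sum_sub_distrib] using hx.2
  · push Not at hj
    have h01 (j : ι) (hji : j ≠ i) : x j = 0 ∨ x j = 1 := by
      rcases (hx.1.1 j).eq_or_lt with h | h
      · exact .inl h.symm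
      · exact .inr (le_antisymm (hx.1.2 j) (hj j hji h))
    have hslack : 0 < (k : ℝ) - ∑ l, x l :=
      sub_pos.2 (sum_lt_natCast_of_eq_zero_or_one h0 h1 h01 hx.2)
    obtain ⟨ε, hε, hεi, hεk⟩ : ∃ ε > 0, ε ≤ δ i ∧ ε ≤ k - ∑ l, x l :=
      ⟨_, lt_min hδi hslack, min_le_left _ _, min_le_right _ _⟩
    refine ⟨Pi.single i ε, by simpa using hε.ne', fun l => ?_, ?_⟩
    · rcases eq_or_ne l i with rfl | hli
      · simpa [abs_of_pos hε] using hεi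
      · simp [hli, hδ0 l]
    · simp only [Finset.sum_pi_single', Finset.mem_univ, if_true, abs_of_pos hε]
      linarith

lemma eq_zero_of_add_mem_of_sub_mem_extremePoints {𝕜 E : Type*} [Field 𝕜] [LinearOrder 𝕜]
    [IsStrictOrderedRing 𝕜] [AddCommGroup E] [Module 𝕜 E] {A : Set E} {x d : E}
    (hx : x ∈ A.extremePoints 𝕜) (hxd : x + d ∈ A) (hxd' : x - d ∈ A) : d = 0 := by
  have hmid : x ∈ openSegment 𝕜 (x + d) (x - d) :=
    ⟨2⁻¹, 2⁻¹, by norm_num, by norm_num, by norm_num, by module⟩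
  simpa using (mem_extremePoints.1 hx).2 _ hxd _ hxd' hmid |>.1

lemma extremePoints_unitCubeSumLE_subset (k : ℕ) :
    (unitCubeSumLE (ι := ι) k).extremePoints ℝ ⊆
      {χ ∈ unitCubeSumLE k | ∀ i, χ i = 0 ∨ χ i = 1} := by
  intro x hx
  refine ⟨hx.1, fun i => ?_⟩
  by_contra h
  push Not at h
  obtain ⟨d, hd, hxd, hxd'⟩ := exists_add_sub_mem_unitCubeSumLE hx.1
    ((hx.1.1.1 i).lt_of_ne (Ne.symm h.1)) ((hx.1.1.2 i).lt_of_ne h.2)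
  exact hd (eq_zero_of_add_mem_of_sub_mem_extremePoints hx hxd hxd')

lemma unitCubeSumLE_subset_convexHull (k : ℕ) :
    unitCubeSumLE (ι := ι) k ⊆ convexHull ℝ {χ ∈ unitCubeSumLE k | ∀ i, χ i = 0 ∨ χ i = 1} := by
  have hfin : {χ ∈ unitCubeSumLE (ι := ι) k | ∀ i, χ i = 0 ∨ χ i = 1}.Finite :=
    (Set.Finite.pi' fun _ => Set.toFinite {(0 : ℝ), 1}).subset fun χ hχ i => hχ.2 i
  calc unitCubeSumLE k
      = closure (convexHull ℝ ((unitCubeSumLE k).extremePoints ℝ)) :=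
        (closure_convexHull_extremePoints (isCompact_unitCubeSumLE _) (convex_unitCubeSumLE _)).symm
    _ ⊆ closure (convexHull ℝ {χ ∈ unitCubeSumLE k | ∀ i, χ i = 0 ∨ χ i = 1}) :=
        closure_mono (convexHull_mono (extremePoints_unitCubeSumLE_subset k))
    _ = convexHull ℝ {χ ∈ unitCubeSumLE k | ∀ i, χ i = 0 ∨ χ i = 1} :=
        (hfin.isCompact_convexHull ℝ).isClosed.closure_eq

end UnitCube

namespace Matrix

variable {ι : Type*} [Fintype ι] [DecidableEq ι]

lemma isStarProjection_diagonal {R : Type*} [Semiring R] [StarRing R] {d : ι → R}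
    (hd : ∀ i, IsStarProjection (d i)) : IsStarProjection (diagonal d) where
  isIdempotentElem := by
    rw [IsIdempotentElem, diagonal_mul_diagonal]
    exact congrArg diagonal (funext fun i => (hd i).isIdempotentElem.eq)
  isSelfAdjoint := by
    rw [IsSelfAdjoint, star_eq_conjTranspose, diagonal_conjTranspose]
    exact congrArg diagonal (funext fun i => (hd i).isSelfAdjoint.star_eq)

omit [DecidableEq ι] in
lemma isStarProjection_iff_transpose_eq_and_mul_self_eq {P : Matrix ι ι ℝ} :
    IsStarProjection P ↔ Pᵀ = P ∧ P * P = P := by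
  rw [isStarProjection_iff, IsSelfAdjoint, star_eq_conjTranspose,
    conjTranspose_eq_transpose_of_trivial, and_comm]
  rfl

omit [Fintype ι] in
lemma diagonal_mem_Icc_iff {d : ι → ℝ} : diagonal d ∈ Set.Icc 0 1 ↔ d ∈ Set.Icc 0 1 := by
  rw [Set.mem_Icc, Set.mem_Icc, nonneg_iff_posSemidef, le_iff, ← diagonal_one, diagonal_sub,
    posSemidef_diagonal_iff, posSemidef_diagonal_iff]
  simp only [Pi.le_def, Pi.zero_apply, Pi.one_apply, sub_nonneg]

lemma trace_conjStarAlgAut_s17 {R : Type*} [CommRing R] [StarRing R] (u : unitary (Matrix ι ι R))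
    (x : Matrix ι ι R) : (Unitary.conjStarAlgAut R _ u x).trace = x.trace := by
  rw [Unitary.conjStarAlgAut_apply, trace_mul_cycle, Unitary.coe_star_mul_self, one_mul]

theorem mem_convexHull_isStarProjection {k : ℕ} {Y : Matrix ι ι ℝ} (hY : Y ∈ Set.Icc 0 1)
    (htr : Y.trace ≤ (k : ℝ)) : Y ∈ convexHull ℝ {P | IsStarProjection P ∧ P.trace ≤ (k : ℝ)} := by
  have hH : Y.IsHermitian := hY.1.posSemidef.isHermitian
  set φ := Unitary.conjStarAlgAut ℝ _ hH.eigenvectorUnitary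
  have hYφ : Y = φ (diagonal hH.eigenvalues) := by
    simpa only [RCLike.ofReal_real_eq_id, Function.id_comp] using hH.spectral_theorem
  have hev : hH.eigenvalues ∈ unitCubeSumLE k := by
    refine ⟨?_, by simpa [hYφ, trace_conjStarAlgAut_s17] using htr⟩
    rwa [hYφ, ← map_zero φ, ← map_one φ, Set.mem_Icc, map_le_map_iff, map_le_map_iff,
      ← Set.mem_Icc, diagonal_mem_Icc_iff] at hY
  let f : (ι → ℝ) →ₗ[ℝ] Matrix ι ι ℝ := φ.toAlgEquiv.toLinearMap ∘ₗ diagonalLinearMap ι ℝ ℝ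
  have hYf : Y ∈ f '' convexHull ℝ {χ ∈ unitCubeSumLE k | ∀ i, χ i = 0 ∨ χ i = 1} :=
    ⟨_, unitCubeSumLE_subset_convexHull k hev, hYφ.symm⟩
  rw [f.image_convexHull] at hYf
  refine convexHull_mono ?_ hYf
  rintro _ ⟨χ, ⟨hχ, hχ01⟩, rfl⟩
  refine ⟨(isStarProjection_diagonal fun i => ?_).map φ, ?_⟩
  · rcases hχ01 i with h | h <;> rw [h]
    exacts [.zero ℝ, .one ℝ]
  · simpa [f, trace_conjStarAlgAut_s17] using hχ.2

theorem convexHull_isStarProjection_trace_le (k : ℕ) :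
    convexHull ℝ {P : Matrix ι ι ℝ | IsStarProjection P ∧ P.trace ≤ (k : ℝ)} =
      Set.Icc 0 1 ∩ {Y | Y.trace ≤ (k : ℝ)} := by
  refine (convexHull_min ?_ ?_).antisymm fun Y hY => mem_convexHull_isStarProjection hY.1 hY.2
  · exact fun P hP => ⟨hP.1.mem_Icc, hP.2⟩
  · exact (convex_Icc 0 1).inter (convex_halfSpace_le (traceLinearMap ι ℝ ℝ).isLinear _)

end Matrix

theorem stmt_17_general (n k : ℕ) :
    convexHull ℝ
      {Y : Matrix (Fin n) (Fin n) ℝ | Yᵀ = Y ∧ Y * Y = Y ∧ Y.trace ≤ (k : ℝ)}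
    = {Y : Matrix (Fin n) (Fin n) ℝ |
        Y.PosSemidef ∧ (1 - Y).PosSemidef ∧ Y.trace ≤ (k : ℝ)} := by
  have h := convexHull_isStarProjection_trace_le (ι := Fin n) k
  simp only [isStarProjection_iff_transpose_eq_and_mul_self_eq, and_assoc] at h
  rw [h]
  ext Y
  simp only [Set.mem_inter_iff, Set.mem_Icc, Set.mem_ofPred_eq, le_iff, sub_zero, and_assoc]

/-- The convex hull of the set of `n×n` orthogonal projection matrices with trace at most
`k` is `{Y : 0 ⪯ Y ⪯ I, tr(Y) ≤ k}`. -/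
theorem stmt_17 (n k : ℕ) (hn : 1 ≤ n) (hk : k ≤ n) :
    convexHull ℝ
      {Y : Matrix (Fin n) (Fin n) ℝ | Yᵀ = Y ∧ Y * Y = Y ∧ Y.trace ≤ (k : ℝ)}
    = {Y : Matrix (Fin n) (Fin n) ℝ |
        Y.PosSemidef ∧ (1 - Y).PosSemidef ∧ Y.trace ≤ (k : ℝ)} :=
  stmt_17_general n k
end
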